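/- arXiv:math/0508364 — 10 statements merged into one kernel-verified Lean document; each statement's English description precedes it below -/
import Mathlib

section
/- For every natural number n ≥ 1, the number derivative satisfies D(θ^n) = [n]·θ^(n−1), where [n] = (θ^((s−1)n) − 1)/(θ^(s−1) − 1). -/
/-- The number derivative on a finite field determined by a generator `θ`
and exponent `s`: `D a = (a^s - a) / (θ^s - θ)`. -/
def numDeriv {F : Type*} [Field F] (θ : F) (s : ℕ) (a : F) : F :=
  (a ^ s - a) / (θ ^ s - θ)

/-- For every `n ≥ 1`, `D (θ^n) = [n] · θ^(n-1)`,
where `[n] = (θ^((s-1)n) - 1)/(θ^(s-1) - 1)` and `s = p^j`. -/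
theorem numDeriv_pow_generator {F : Type*} [Field F] [Fintype F]
    (p k j : ℕ) (hp : p.Prime) (hk : 0 < k) (hj : 0 < j) (hkj : ¬ k ∣ j)
    (hcard : Fintype.card F = p ^ k)
    (θ : F) (hθ : ∀ a : F, a ≠ 0 → ∃ m : ℕ, θ ^ m = a)
    (hs : θ ^ p ^ j ≠ θ) (hq : θ ^ (p ^ j - 1) ≠ 1)
    (n : ℕ) (hn : 1 ≤ n) :
    numDeriv θ (p ^ j) (θ ^ n) =
      ((θ ^ ((p ^ j - 1) * n) - 1) / (θ ^ (p ^ j - 1) - 1)) * θ ^ (n - 1) := by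
  have hθ0 : θ ≠ 0 := by
    intro h
    apply hs
    rw [h, zero_pow (pow_pos hp.pos j).ne']
  obtain ⟨m, hm⟩ : ∃ m, p ^ j = m + 1 :=
    ⟨p ^ j - 1, (Nat.succ_pred_eq_of_pos (pow_pos hp.pos j)).symm⟩
  obtain ⟨l, hl⟩ : ∃ l, n = l + 1 := ⟨n - 1, (Nat.succ_pred_eq_of_pos hn).symm⟩
  have hq' : θ ^ m - 1 ≠ 0 := by
    rw [hm] at hq; simpa [sub_eq_zero] using hq
  subst hl
  rw [hm]
  simp only [Nat.add_sub_cancel, numDeriv, ← pow_mul]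
  have hd : θ ^ (m + 1) - θ ≠ 0 := by rw [← hm]; exact sub_ne_zero.mpr hs
  field_simp
  ring
end

section
/- If the power map a ↦ a^s is additive on F, i.e., (a + b)^s = a^s + b^s for all a, b ∈ F, then there exists a natural number t with 0 ≤ t < k such that s ≡ p^t (mod p^k − 1); that is, the deformation map M_s is linear if and only if it is a Frobenius map. -/
open Polynomial

/-- If all the "middle" binomial coefficients of `r` are divisible by the prime `p`,
then `r` is a power of `p`. -/
lemma aux_pow_of_dvd_choose (p : ℕ) (hp : p.Prime) :
    ∀ r : ℕ, 0 < r → (∀ i, 0 < i → i < r → p ∣ r.choose i) → ∃ t, r = p ^ t := by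
  haveI : Fact p.Prime := ⟨hp⟩
  intro r
  induction r using Nat.strong_induction_on with
  | _ r ih =>
    intro hr hdvd
    rcases lt_or_ge r p with hlt | hle
    · -- r < p : then r = 1
      rcases Nat.lt_or_ge r 2 with h1 | h1
      · exact ⟨0, by rw [pow_zero]; omega⟩
      · exfalso
        have h := hdvd 1 one_pos (by omega)
        rw [Nat.choose_one_right] at h
        have := Nat.le_of_dvd hr h
        omega
    · -- p ≤ r : then p ∣ r, and we induct on r / p
      have h2 : 2 ≤ p := hp.two_le
      have hpr : p ∣ r := by
        have h := hdvd 1 one_pos (by omega)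
        rwa [Nat.choose_one_right] at h
      obtain ⟨m, rfl⟩ := hpr
      have hm : 0 < m := by
        rcases Nat.eq_zero_or_pos m with h | h
        · subst h; simp at hr
        · exact h
      have hmlt : m < p * m := by nlinarith
      have hdvd' : ∀ j, 0 < j → j < m → p ∣ m.choose j := by
        intro j hj hjm
        have hij : p * j < p * m := by
          exact Nat.mul_lt_mul_of_le_of_lt le_rfl hjm (by omega)
        have h := hdvd (p * j) (by positivity) hij
        have hluc := Choose.choose_modEq_choose_mod_mul_choose_div_nat
          (n := p * m) (k := p * j) (p := p)
        have hmod1 : p * m % p = 0 := Nat.mul_mod_right p m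
        have hmod2 : p * j % p = 0 := Nat.mul_mod_right p j
        have hdiv1 : p * m / p = m := Nat.mul_div_cancel_left m (by omega)
        have hdiv2 : p * j / p = j := Nat.mul_div_cancel_left j (by omega)
        rw [hmod1, hmod2, hdiv1, hdiv2, Nat.choose_self, one_mul] at hluc
        -- hluc : (p*m).choose (p*j) ≡ m.choose j [MOD p]
        have h0 : (p * m).choose (p * j) % p = 0 := Nat.eq_zero_of_dvd_of_lt
          (Nat.dvd_mod_iff dvd_rfl |>.mpr h) (Nat.mod_lt _ (by omega))
        unfold Nat.ModEq at hluc
        rw [h0] at hluc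
        exact Nat.dvd_of_mod_eq_zero hluc.symm
      obtain ⟨t, rfl⟩ := ih m hmlt hm hdvd'
      exact ⟨t + 1, by ring⟩

/-- If the power map `a ↦ a^s` is additive on a finite field `F`
with `p^k` elements, then `s ≡ p^t (mod p^k - 1)` for some `0 ≤ t < k`:
the deformation is a Frobenius map. -/
theorem pow_add_iff_frobenius {F : Type*} [Field F] [Fintype F]
    (p k s : ℕ) (hp : p.Prime) (hk : 0 < k) (hcard : Fintype.card F = p ^ k)
    (hs : 0 < s)
    (hadd : ∀ a b : F, (a + b) ^ s = a ^ s + b ^ s) :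
    ∃ t : ℕ, t < k ∧ s ≡ p ^ t [MOD p ^ k - 1] := by
  haveI : Fact p.Prime := ⟨hp⟩
  have h2p : 2 ≤ p := hp.two_le
  have hq2 : 2 ≤ p ^ k := le_trans h2p (Nat.le_self_pow hk.ne' p)
  by_cases hq : p ^ k - 1 = 1
  · exact ⟨0, hk, by rw [hq]; exact Nat.modEq_one⟩
  -- now p ^ k ≥ 3 and p ^ k - 1 ≥ 2
  have hq3 : 3 ≤ p ^ k := by omega
  haveI hCharP : CharP F p := by
    rw [CharP.charP_iff_prime_eq_zero hp]
    have h0 : ((p ^ k : ℕ) : F) = 0 := by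
      rw [← hcard]; exact Nat.cast_card_eq_zero F
    push_cast at h0
    exact pow_eq_zero_iff hk.ne' |>.mp h0
  set q1 := p ^ k - 1 with hq1
  set r := s % q1 with hrdef
  have hq1pos : 0 < q1 := by omega
  have hpow : ∀ a : F, a ≠ 0 → a ^ q1 = 1 := by
    intro a ha
    have := FiniteField.pow_card_sub_one_eq_one a ha
    rwa [hcard] at this
  -- r ≠ 0
  have hr0 : r ≠ 0 := by
    intro h
    obtain ⟨c, hc⟩ := Nat.dvd_of_mod_eq_zero h
    have hall : ∀ x : F, x ≠ 0 → x ^ s = 1 := by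
      intro x hx
      rw [hc, pow_mul, hpow x hx, one_pow]
    obtain ⟨a, ha0, ha1⟩ : ∃ a : F, a ≠ 0 ∧ a + 1 ≠ 0 := by
      classical
      by_contra hcon
      push_neg at hcon
      have hsub : (Finset.univ : Finset F) ⊆ {0, -1} := by
        intro a _
        simp only [Finset.mem_insert, Finset.mem_singleton]
        rcases eq_or_ne a 0 with h' | h'
        · exact Or.inl h'
        · right
          have := hcon a h'
          linear_combination this
      have hle := Finset.card_le_card hsub
      have h2' : ({0, -1} : Finset F).card ≤ 2 :=
        le_trans (Finset.card_insert_le _ _) (by simp)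
      rw [Finset.card_univ, hcard] at hle
      omega
    have h1 : (1 : F) = 1 + 1 := by
      calc (1 : F) = (a + 1) ^ s := (hall _ ha1).symm
        _ = a ^ s + 1 ^ s := hadd a 1
        _ = 1 + 1 := by rw [hall a ha0, one_pow]
    exact one_ne_zero (left_eq_add.mp h1)
  have hrlt : r < q1 := Nat.mod_lt _ hq1pos
  -- a ^ s = a ^ r for all a
  have hpows : ∀ a : F, a ^ s = a ^ r := by
    intro a
    rcases eq_or_ne a 0 with rfl | ha
    · rw [zero_pow hs.ne', zero_pow hr0]
    · conv_lhs => rw [← Nat.div_add_mod s q1]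
      rw [pow_add, pow_mul, hpow a ha, one_pow, one_mul]
  -- the power map with exponent r is additive at (a, 1)
  have haddr : ∀ a : F, (a + 1) ^ r = a ^ r + 1 := by
    intro a
    rw [← hpows, hadd a 1, hpows, one_pow]
  -- the polynomial (X+1)^r - X^r - 1 vanishes identically, hence is zero
  set P : F[X] := (X + 1) ^ r - X ^ r - 1 with hPdef
  have heval : ∀ a : F, P.eval a = 0 := by
    intro a
    simp only [hPdef, eval_sub, eval_pow, eval_add, eval_X, eval_one, haddr a]
    ring
  have hdeg : P.natDegree < Fintype.card F := by
    have h1 : ((X + 1 : F[X]) ^ r).natDegree ≤ r := by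
      refine le_trans (natDegree_pow_le) ?_
      have h0 : (X + 1 : F[X]).natDegree ≤ 1 :=
        le_trans (natDegree_add_le _ _) (by simp)
      nlinarith [h0]
    have h2 : ((X : F[X]) ^ r).natDegree ≤ r := by
      rw [natDegree_X_pow]
    have h3 : P.natDegree ≤ r := by
      refine le_trans (natDegree_sub_le _ _) ?_
      simp only [natDegree_one]
      refine max_le (le_trans (natDegree_sub_le _ _) ?_) (by omega)
      exact max_le h1 h2
    rw [hcard]
    omega
  have hP0 : P = 0 :=
    Polynomial.eq_zero_of_natDegree_lt_card_of_eval_eq_zero P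
      Function.injective_id heval hdeg
  -- hence p divides all middle binomial coefficients of r
  have hchoose : ∀ i, 0 < i → i < r → p ∣ r.choose i := by
    intro i h1 h2
    have hc : ((r.choose i : ℕ) : F) = 0 := by
      have hcoeff := congrArg (fun Q : F[X] => Q.coeff i) hP0
      simpa [hPdef, coeff_sub, Polynomial.coeff_X_add_one_pow, coeff_X_pow,
        Polynomial.coeff_one, h2.ne, h1.ne'] using hcoeff
    exact (CharP.cast_eq_zero_iff F p _).mp hc
  obtain ⟨t, ht⟩ := aux_pow_of_dvd_choose p hp r (Nat.pos_of_ne_zero hr0) hchoose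
  refine ⟨t, ?_, ?_⟩
  · have hlt : p ^ t < p ^ k := by omega
    exact (Nat.pow_lt_pow_iff_right (by omega)).mp hlt
  · have h := (Nat.mod_modEq s q1).symm
    rwa [← hrdef, ht] at h
end

section
/- The number derivative satisfies the quotient rule: for all a, b ∈ F with b ≠ 0, D(a/b) = (b·D(a) − a·D(b))/(b·b^s). -/
/-- The quotient rule `D(a/b) = (b·D(a) - a·D(b))/(b·b^s)`. -/
theorem numDeriv_div {F : Type*} [Field F] [Fintype F]
    (p k j : ℕ) (hp : p.Prime) (hk : 0 < k) (hj : 0 < j) (hkj : ¬ k ∣ j)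
    (hcard : Fintype.card F = p ^ k)
    (θ : F) (hθ : ∀ a : F, a ≠ 0 → ∃ m : ℕ, θ ^ m = a)
    (hs : θ ^ p ^ j ≠ θ)
    (a b : F) (hb : b ≠ 0) :
    numDeriv θ (p ^ j) (a / b) =
      (b * numDeriv θ (p ^ j) a - a * numDeriv θ (p ^ j) b) / (b * b ^ p ^ j) := by
  have hc : θ ^ p ^ j - θ ≠ 0 := sub_ne_zero.mpr hs
  have hbs : b ^ p ^ j ≠ 0 := pow_ne_zero _ hb
  unfold numDeriv
  rw [div_pow]
  field_simp
  ring
end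

section
/- The number derivative satisfies the second form of the quotient rule: for all a, b ∈ F with b ≠ 0, D(a/b) = (b^s·D(a) − a^s·D(b))/(b·b^s). -/
/-- The second quotient rule
`D(a/b) = (b^s·D(a) - a^s·D(b))/(b·b^s)`. -/
theorem numDeriv_div' {F : Type*} [Field F] [Fintype F]
    (p k j : ℕ) (hp : p.Prime) (hk : 0 < k) (hj : 0 < j) (hkj : ¬ k ∣ j)
    (hcard : Fintype.card F = p ^ k)
    (θ : F) (hθ : ∀ a : F, a ≠ 0 → ∃ m : ℕ, θ ^ m = a)
    (hs : θ ^ p ^ j ≠ θ)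
    (a b : F) (hb : b ≠ 0) :
    numDeriv θ (p ^ j) (a / b) =
      (b ^ p ^ j * numDeriv θ (p ^ j) a - a ^ p ^ j * numDeriv θ (p ^ j) b) /
        (b * b ^ p ^ j) := by
  have hθs : θ ^ p ^ j - θ ≠ 0 := sub_ne_zero.mpr hs
  have hbs : b ^ p ^ j ≠ 0 := pow_ne_zero _ hb
  simp only [numDeriv, div_pow]
  field_simp
  ring
end

section
/- For a natural number n, the element θ^n is a constant, i.e., D(θ^n) = 0, if and only if (p^k − 1) divides n·(p^j − 1). -/
theorem numDeriv_eq_zero_iff {F : Type*} [Field F] {θ : F} {s : ℕ} (hs : θ ^ s ≠ θ) (a : F) :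
    numDeriv θ s a = 0 ↔ a ^ s = a := by
  rw [numDeriv, div_eq_zero_iff, or_iff_left (sub_ne_zero.mpr hs), sub_eq_zero]

theorem orderOf_eq_card_sub_one_of_forall_exists_pow_eq {G₀ : Type*} [GroupWithZero G₀]
    [Finite G₀] {θ : G₀} (hθ0 : θ ≠ 0) (hθ : ∀ a : G₀, a ≠ 0 → ∃ m : ℕ, θ ^ m = a) :
    orderOf θ = Nat.card G₀ - 1 := by
  have hgen : ∀ v : G₀ˣ, v ∈ Subgroup.zpowers (Units.mk0 θ hθ0) := fun v ↦ by
    obtain ⟨m, hm⟩ := hθ v v.ne_zero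
    exact ⟨m, Units.ext (by simpa using hm)⟩
  rw [← Nat.card_units, ← orderOf_eq_card_of_forall_mem_zpowers hgen, ← orderOf_units]
  rfl

theorem IsOfFinOrder.pow_pow_eq_pow_iff_orderOf_dvd {M : Type*} [Monoid M] {x : M}
    (hx : IsOfFinOrder x) {s : ℕ} (hs : s ≠ 0) (n : ℕ) :
    (x ^ n) ^ s = x ^ n ↔ orderOf x ∣ n * (s - 1) := by
  rw [← pow_mul, hx.pow_eq_pow_iff_modEq, Nat.ModEq.comm,
    Nat.modEq_iff_dvd' (Nat.le_mul_of_pos_right n (Nat.pos_of_ne_zero hs)), Nat.mul_sub_one]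

theorem numDeriv_pow_eq_zero_iff_general {F : Type*} [Field F] [Fintype F]
    (p k j : ℕ)
    (hcard : Fintype.card F = p ^ k)
    (θ : F) (hθ : ∀ a : F, a ≠ 0 → ∃ m : ℕ, θ ^ m = a)
    (hs : θ ^ p ^ j ≠ θ)
    (n : ℕ) :
    numDeriv θ (p ^ j) (θ ^ n) = 0 ↔ (p ^ k - 1) ∣ n * (p ^ j - 1) := by
  have hq : 1 < p ^ k := hcard ▸ Fintype.one_lt_card
  have hsj : p ^ j ≠ 0 := pow_ne_zero j (by rintro rfl; exact hq.not_ge (pow_le_one₀ le_rfl zero_le_one))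
  have hθ0 : θ ≠ 0 := by
    rintro rfl
    exact hs (zero_pow hsj)
  have hord : orderOf θ = p ^ k - 1 := by
    rw [orderOf_eq_card_sub_one_of_forall_exists_pow_eq hθ0 hθ, Nat.card_eq_fintype_card, hcard]
  have hfin : IsOfFinOrder θ := orderOf_pos_iff.mp (hord ▸ Nat.sub_pos_of_lt hq)
  rw [numDeriv_eq_zero_iff hs, hfin.pow_pow_eq_pow_iff_orderOf_dvd hsj, hord]

/-- `θ^n` is a constant iff `(p^k - 1) ∣ n·(p^j - 1)`. -/
theorem numDeriv_pow_eq_zero_iff {F : Type*} [Field F] [Fintype F]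
    (p k j : ℕ) (hp : p.Prime) (hk : 0 < k) (hj : 0 < j) (hkj : ¬ k ∣ j)
    (hcard : Fintype.card F = p ^ k)
    (θ : F) (hθ : ∀ a : F, a ≠ 0 → ∃ m : ℕ, θ ^ m = a)
    (hs : θ ^ p ^ j ≠ θ)
    (n : ℕ) :
    numDeriv θ (p ^ j) (θ ^ n) = 0 ↔ (p ^ k - 1) ∣ n * (p ^ j - 1) :=
  numDeriv_pow_eq_zero_iff_general p k j hcard θ hθ hs n
end

section
/- If a ∈ F satisfies D(a) = a and a^(s−1) ≠ 1 (with a ≠ 0), then for every natural number m, D(a^m) = ((a^((s−1)m) − 1)/(a^(s−1) − 1))·a^m; that is, D(exp^m) = ([m]·x^m)(exp), where the q-number function [m] is evaluated at a rather than at θ. -/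
/-- If `D(a) = a`, `a ≠ 0` and `a^(s-1) ≠ 1`, then
`D(a^m) = ((a^((s-1)m) - 1)/(a^(s-1) - 1))·a^m`; i.e.
`D(exp^m) = ([m]·x^m)(exp)` with the q-number evaluated at `a`. -/
theorem numDeriv_exp_pow {F : Type*} [Field F] [Fintype F]
    (p k j : ℕ) (hp : p.Prime) (hk : 0 < k) (hj : 0 < j) (hkj : ¬ k ∣ j)
    (hcard : Fintype.card F = p ^ k)
    (θ : F) (hθ : ∀ a : F, a ≠ 0 → ∃ m : ℕ, θ ^ m = a)
    (hs : θ ^ p ^ j ≠ θ)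
    (a : F) (ha : a ≠ 0) (hDa : numDeriv θ (p ^ j) a = a)
    (ha1 : a ^ (p ^ j - 1) ≠ 1) (m : ℕ) :
    numDeriv θ (p ^ j) (a ^ m) =
      ((a ^ ((p ^ j - 1) * m) - 1) / (a ^ (p ^ j - 1) - 1)) * a ^ m := by
  have hn1 : 1 ≤ p ^ j := Nat.one_le_pow _ _ hp.pos
  set n := p ^ j with hn
  have hc : θ ^ n - θ ≠ 0 := sub_ne_zero.mpr hs
  have ha1' : a ^ (n - 1) - 1 ≠ 0 := sub_ne_zero.mpr ha1
  have key : a ^ n = a * a ^ (n - 1) := by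
    rw [← pow_succ']; congr 1; omega
  have hDa' : a ^ n - a = a * (θ ^ n - θ) := by
    rw [numDeriv, div_eq_iff hc] at hDa
    linear_combination hDa
  have h1 : a ^ (n - 1) - 1 = θ ^ n - θ := by
    apply mul_left_cancel₀ ha
    rw [key] at hDa'
    linear_combination hDa'
  rw [numDeriv, ← h1]
  have h3 : (a ^ m) ^ n = a ^ ((n - 1) * m) * a ^ m := by
    rw [← pow_mul, ← pow_add]
    congr 1
    obtain ⟨t, ht⟩ := Nat.exists_eq_add_of_le hn1
    rw [ht, Nat.add_sub_cancel_left]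
    ring
  rw [h3]
  field_simp
end

section
/- The Hamiltonian H(a) = D(θ·a) + θ·D(a) acts diagonally on powers of θ with energy [n+1] + [n]: for every natural number n, D(θ^(n+1)) + θ·D(θ^n) = ([n+1] + [n])·θ^n. -/
/-- The Hamiltonian `H(a) = D(θ·a) + θ·D(a)` acts diagonally on
powers of `θ` with energy `[n+1] + [n]`. -/
theorem hamiltonian_pow {F : Type*} [Field F] [Fintype F]
    (p k j : ℕ) (hp : p.Prime) (hk : 0 < k) (hj : 0 < j) (hkj : ¬ k ∣ j)
    (hcard : Fintype.card F = p ^ k)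
    (θ : F) (hθ : ∀ a : F, a ≠ 0 → ∃ m : ℕ, θ ^ m = a)
    (hs : θ ^ p ^ j ≠ θ) (hq : θ ^ (p ^ j - 1) ≠ 1)
    (n : ℕ) :
    numDeriv θ (p ^ j) (θ ^ (n + 1)) + θ * numDeriv θ (p ^ j) (θ ^ n) =
      ((θ ^ ((p ^ j - 1) * (n + 1)) - 1) / (θ ^ (p ^ j - 1) - 1) +
        (θ ^ ((p ^ j - 1) * n) - 1) / (θ ^ (p ^ j - 1) - 1)) * θ ^ n := by
  obtain ⟨q, hq'⟩ : ∃ q, p ^ j = q + 1 :=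
    ⟨p ^ j - 1, (Nat.succ_pred_eq_of_pos (pow_pos hp.pos j)).symm⟩
  have hθ0 : θ ≠ 0 := by
    intro h
    apply hs
    rw [h, zero_pow (pow_pos hp.pos j).ne']
  have hd : θ ^ p ^ j - θ ≠ 0 := sub_ne_zero.mpr hs
  have ht : θ ^ (p ^ j - 1) - 1 ≠ 0 := sub_ne_zero.mpr hq
  rw [hq'] at hd ht ⊢
  simp only [Nat.add_sub_cancel] at ht ⊢
  unfold numDeriv
  field_simp
  ring_nf
end

section
/- At most half of the elements of F have an antiderivative: the image of the number derivative D satisfies 2·|{b ∈ F : ∃ a ∈ F, D(a) = b}| ≤ p^k. -/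
/-- At most half of the elements of `F` have an antiderivative. -/
theorem image_numDeriv_card_le {F : Type*} [Field F] [Fintype F]
    (p k j : ℕ) (hp : p.Prime) (hk : 0 < k) (hj : 0 < j) (hkj : ¬ k ∣ j)
    (hcard : Fintype.card F = p ^ k)
    (θ : F) (hθ : ∀ a : F, a ≠ 0 → ∃ m : ℕ, θ ^ m = a)
    (hs : θ ^ p ^ j ≠ θ) :
    2 * Set.ncard {b : F | ∃ a : F, numDeriv θ (p ^ j) a = b} ≤ p ^ k := by
  classical
  -- establish CharP F p
  haveI := Fact.mk hp
  have hq : (ringChar F).Prime := CharP.char_is_prime F (ringChar F)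
  obtain ⟨n, hn⟩ := FiniteField.card F (ringChar F)
  have hpq : p = ringChar F := by
    have hdvd : p ∣ (ringChar F) ^ (n : ℕ) := by
      rw [← hn.2, hcard]
      exact dvd_pow_self p hk.ne'
    have := hp.dvd_of_dvd_pow hdvd
    exact (Nat.prime_dvd_prime_iff_eq hp hq).mp this
  haveI : CharP F p := hpq ▸ (inferInstance : CharP F (ringChar F))
  -- D(a+1) = D(a)
  have key : ∀ a : F, numDeriv θ (p ^ j) (a + 1) = numDeriv θ (p ^ j) a := by
    intro a
    unfold numDeriv
    congr 1
    rw [add_pow_char_pow, one_pow]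
    ring
  -- count fibers
  set D : F → F := numDeriv θ (p ^ j) with hD
  have hset : {b : F | ∃ a : F, numDeriv θ (p ^ j) a = b}
      = ↑(Finset.image D Finset.univ) := by
    ext b
    simp [hD]
  rw [hset, Set.ncard_coe_finset, ← hcard, ← Finset.card_univ]
  rw [Finset.card_eq_sum_card_image D Finset.univ]
  rw [mul_comm, ← smul_eq_mul, ← Finset.sum_const]
  apply Finset.sum_le_sum
  intro b hb
  simp only [Finset.mem_image, Finset.mem_univ, true_and] at hb
  obtain ⟨a, ha⟩ := hb
  have h1 : a ∈ Finset.univ.filter (fun x => D x = b) := by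
    simp [ha]
  have h2 : a + 1 ∈ Finset.univ.filter (fun x => D x = b) := by
    simp [key a, ha]
  have hne : a ≠ a + 1 := by
    intro h
    have : (1 : F) = 0 := by linear_combination -h
    simp at this
  calc 2 = ({a, a + 1} : Finset F).card := by
        rw [Finset.card_insert_of_notMem (by simpa using hne), Finset.card_singleton]
      _ ≤ _ := Finset.card_le_card (by
        intro x hx
        simp only [Finset.mem_insert, Finset.mem_singleton] at hx
        rcases hx with rfl | rfl
        · exact h1
        · exact h2)
end

section
/- The logarithmic derivative of a product is the q-deformed sum of the logarithmic derivatives: for all nonzero a, b ∈ F, ld(a·b) = b^(s−1)·ld(a) + ld(b) = a^(s−1)·ld(b) + ld(a), where ld(a) = D(a)/a. -/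
/-- The logarithmic derivative `ld(a) = D(a)/a`. -/
def logDeriv' {F : Type*} [Field F] (θ : F) (s : ℕ) (a : F) : F :=
  numDeriv θ s a / a

/-- The logarithmic derivative of a product is the q-deformed
sum of the logarithmic derivatives:
`ld(ab) = b^(s-1)·ld(a) + ld(b) = a^(s-1)·ld(b) + ld(a)`. -/
theorem logDeriv_mul_qdeformed {F : Type*} [Field F] [Fintype F]
    (p k j : ℕ) (hp : p.Prime) (hk : 0 < k) (hj : 0 < j) (hkj : ¬ k ∣ j)
    (hcard : Fintype.card F = p ^ k)
    (θ : F) (hθ : ∀ a : F, a ≠ 0 → ∃ m : ℕ, θ ^ m = a)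
    (hs : θ ^ p ^ j ≠ θ)
    (a b : F) (ha : a ≠ 0) (hb : b ≠ 0) :
    logDeriv' θ (p ^ j) (a * b) =
        b ^ (p ^ j - 1) * logDeriv' θ (p ^ j) a + logDeriv' θ (p ^ j) b ∧
      logDeriv' θ (p ^ j) (a * b) =
        a ^ (p ^ j - 1) * logDeriv' θ (p ^ j) b + logDeriv' θ (p ^ j) a := by
  have hc : θ ^ p ^ j - θ ≠ 0 := sub_ne_zero.mpr hs
  have h1 : 1 ≤ p ^ j := Nat.one_le_pow _ _ hp.pos
  obtain ⟨n, hn⟩ : ∃ n, p ^ j = n + 1 := ⟨p ^ j - 1, (Nat.succ_pred_eq_of_pos h1).symm⟩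
  unfold logDeriv' numDeriv
  rw [mul_pow, hn]
  rw [hn] at hc
  simp only [Nat.add_sub_cancel]
  constructor <;> field_simp <;> ring
end

section
/- The second number derivative of θ^n carries a correction term: for every natural number n ≥ 2, D(D(θ^n)) = [n]·[n−1]·θ^(n−2) + θ^(s(n−1))·D([n]), where [m] = (θ^((s−1)m) − 1)/(θ^(s−1) − 1) and D is applied to the field element [n]. -/
/-- The second derivative of `θ^n` carries a correction term:
`D(D(θ^n)) = [n]·[n-1]·θ^(n-2) + θ^(s(n-1))·D([n])`. -/
theorem numDeriv_sq {F : Type*} [Field F] [Fintype F]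
    (p k j : ℕ) (hp : p.Prime) (hk : 0 < k) (hj : 0 < j) (hkj : ¬ k ∣ j)
    (hcard : Fintype.card F = p ^ k)
    (θ : F) (hθ : ∀ a : F, a ≠ 0 → ∃ m : ℕ, θ ^ m = a)
    (hs : θ ^ p ^ j ≠ θ) (hq : θ ^ (p ^ j - 1) ≠ 1)
    (n : ℕ) (hn : 2 ≤ n) :
    numDeriv θ (p ^ j) (numDeriv θ (p ^ j) (θ ^ n)) =
      ((θ ^ ((p ^ j - 1) * n) - 1) / (θ ^ (p ^ j - 1) - 1)) *
          ((θ ^ ((p ^ j - 1) * (n - 1)) - 1) / (θ ^ (p ^ j - 1) - 1)) *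
          θ ^ (n - 2) +
        θ ^ (p ^ j * (n - 1)) *
          numDeriv θ (p ^ j)
            ((θ ^ ((p ^ j - 1) * n) - 1) / (θ ^ (p ^ j - 1) - 1)) := by
  set s := p ^ j with hsdef
  have hs1 : 1 ≤ s := Nat.one_le_pow _ _ hp.pos
  set t := s - 1 with htdef
  have hst : s = t + 1 := by omega
  have hθ0 : θ ≠ 0 := by
    intro h
    apply hs
    rw [h, zero_pow (by omega)]
  have hqt : θ ^ t - 1 ≠ 0 := sub_ne_zero.mpr hq
  have hc : θ ^ s - θ ≠ 0 := sub_ne_zero.mpr hs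
  obtain ⟨m, rfl⟩ : ∃ m, n = m + 1 + 1 := ⟨n - 2, by omega⟩
  have key : ∀ r : ℕ, numDeriv θ s (θ ^ (r + 1)) =
      ((θ ^ (t * (r + 1)) - 1) / (θ ^ t - 1)) * θ ^ r := by
    intro r
    rw [numDeriv]
    field_simp
    rw [hst]
    ring
  have h1 : m + 1 + 1 - 1 = m + 1 := rfl
  have h2 : m + 1 + 1 - 2 = m := rfl
  rw [h1, h2, key (m + 1)]
  have leib : ∀ a : F, numDeriv θ s (a * θ ^ (m + 1)) =
      a * numDeriv θ s (θ ^ (m + 1)) + θ ^ (s * (m + 1)) * numDeriv θ s a := by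
    intro a
    simp only [numDeriv, mul_pow]
    field_simp
    ring
  rw [leib, key m]
  ring
end
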